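/- arXiv:1904.12096 — 3 statements merged into one kernel-verified Lean document; each statement's English description precedes it below -/
import Mathlib

section
/- For a bounded linear operator T on a complex Hilbert space, if T² = 0 then the t-Aluthge transform T̃_t = 0 for every t ∈ [0,1]. -/
/-!
Write `A = |T|`. Since `T U A = T² = 0`, the operator `T U` vanishes on the closure of the
range of `A`, which is `(ker A)ᗮ`. For `0 < t < 1` the range of `A ^ (1 - t)` lies in
`(ker A ^ (1 - t))ᗮ ⊆ (ker A)ᗮ`, so `T U A ^ (1 - t) = 0`; as `ker T = ker A ⊆ ker A ^ t`,
also `A ^ t U A ^ (1 - t) = 0`.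
-/

open scoped NNReal ENNReal
open ContinuousLinearMap

set_option synthInstance.maxHeartbeats 1000000
set_option maxHeartbeats 1000000


variable {H : Type*} [NormedAddCommGroup H] [InnerProductSpace ℂ H] [CompleteSpace H]

/-- The numerical radius of a bounded linear operator. -/
noncomputable def numRadius (T : H →L[ℂ] H) : ℝ :=
  ⨆ x : {x : H // ‖x‖ = 1}, ‖(inner ℂ (T x) x : ℂ)‖

/-- The modulus `|T| = (T*T)^{1/2}`. -/
noncomputable def opAbs (T : H →L[ℂ] H) : H →L[ℂ] H :=
  CFC.sqrt (adjoint T * T)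

/-- The `t`-Aluthge transform `|T|^t U |T|^{1-t}` (with `|T|^0` the support
projection, i.e. `U*U` for the polar partial isometry `U`). -/
noncomputable def aluthge (T U : H →L[ℂ] H) (t : ℝ≥0) : H →L[ℂ] H :=
  CFC.nnrpow (opAbs T) t * U * CFC.nnrpow (opAbs T) (1 - t)

section SelfAdjoint

variable {𝕜 E : Type*} [RCLike 𝕜] [NormedAddCommGroup E] [InnerProductSpace 𝕜 E]
  [CompleteSpace E]

theorem IsSelfAdjoint.ker_mul_self {B : E →L[𝕜] E} (hB : IsSelfAdjoint B) :
    (B * B).ker = B.ker := by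
  have h := B.ker_adjoint_comp_self
  rwa [hB.adjoint_eq] at h

theorem IsSelfAdjoint.range_le_orthogonal_ker {B : E →L[𝕜] E} (hB : IsSelfAdjoint B) :
    B.range ≤ B.kerᗮ := by
  rw [B.orthogonal_ker, hB.adjoint_eq]
  exact Submodule.le_topologicalClosure _

theorem IsSelfAdjoint.orthogonal_ker_le_ker_of_mul_eq_zero {A B : E →L[𝕜] E}
    (hA : IsSelfAdjoint A) (h : B * A = 0) : A.kerᗮ ≤ B.ker := by
  rw [A.orthogonal_ker, hA.adjoint_eq]
  refine Submodule.topologicalClosure_minimal _ ?_ B.isClosed_ker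
  rintro _ ⟨y, rfl⟩
  simpa using congr($h y)

end SelfAdjoint

theorem ker_le_ker_nnrpow {A : H →L[ℂ] H} (hA : 0 ≤ A) {s : ℝ≥0} (hs : 0 < s) :
    A.ker ≤ (A ^ s).ker := by
  obtain ⟨n, hn⟩ : ∃ n : ℕ, 1 < 2 ^ n * s := by
    obtain ⟨n, hn⟩ := pow_unbounded_of_one_lt s⁻¹ (one_lt_two (α := ℝ≥0))
    exact ⟨n, by rwa [← div_lt_iff₀ hs, one_div]⟩
  -- For `s > 1`, `A ^ s = A ^ (s - 1) * A`; and `ker (A ^ (2 s)) = ker (A ^ s)`, `A ^ s` being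
  -- self-adjoint.
  induction n generalizing s with
  | zero =>
    rw [pow_zero, one_mul] at hn
    rw [← tsub_add_cancel_of_le hn.le, CFC.nnrpow_add (tsub_pos_of_lt hn) one_pos,
      CFC.nnrpow_one A]
    exact LinearMap.ker_le_ker_comp _ _
  | succ n ih =>
    have hdouble : A.ker ≤ (A ^ (s + s)).ker :=
      ih (by positivity) (by rwa [pow_succ, mul_assoc, two_mul] at hn)
    rwa [CFC.nnrpow_add hs hs, (IsSelfAdjoint.of_nonneg CFC.nnrpow_nonneg).ker_mul_self]
      at hdouble

theorem nnrpow_apply_mem_orthogonal_ker {A : H →L[ℂ] H} (hA : 0 ≤ A) {s : ℝ≥0} (hs : 0 < s)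
    (x : H) : (A ^ s) x ∈ A.kerᗮ :=
  Submodule.orthogonal_le (ker_le_ker_nnrpow hA hs)
    ((IsSelfAdjoint.of_nonneg CFC.nnrpow_nonneg).range_le_orthogonal_ker ⟨x, rfl⟩)

theorem opAbs_nonneg (T : H →L[ℂ] H) : 0 ≤ opAbs T :=
  CFC.sqrt_nonneg _

theorem ker_opAbs (T : H →L[ℂ] H) : (opAbs T).ker = T.ker := by
  have hsq : opAbs T * opAbs T = adjoint T * T :=
    CFC.sqrt_mul_sqrt_self _ (by simpa only [star_eq_adjoint] using star_mul_self_nonneg T)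
  rw [← (opAbs_nonneg T).isSelfAdjoint.ker_mul_self, hsq]
  exact T.ker_adjoint_comp_self

theorem aluthge_eq_zero_of_sq_eq_zero_general (T U : H →L[ℂ] H)
    (hU : T = U * opAbs T)
    (h : T ^ 2 = 0) :
    ∀ t : ℝ≥0, t ≤ 1 → aluthge T U t = 0 := by
  intro t ht
  -- `CFC.nnrpow _ 0 = 0` (non-unital calculus), so both endpoints vanish trivially.
  obtain rfl | ht0 := eq_zero_or_pos t
  · simp [aluthge, CFC.nnrpow_eq_pow, CFC.nnrpow_zero]
  obtain rfl | ht1 := ht.eq_or_lt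
  · simp [aluthge, CFC.nnrpow_eq_pow, CFC.nnrpow_zero]
  have hA := opAbs_nonneg T
  have hTU : (opAbs T).kerᗮ ≤ (T * U).ker :=
    hA.isSelfAdjoint.orthogonal_ker_le_ker_of_mul_eq_zero (by rw [mul_assoc, ← hU, ← sq, h])
  ext x
  show (opAbs T ^ t) (U ((opAbs T ^ (1 - t)) x)) = 0
  have hker : U ((opAbs T ^ (1 - t)) x) ∈ (opAbs T).ker := by
    rw [ker_opAbs]
    exact hTU (nnrpow_apply_mem_orthogonal_ker hA (tsub_pos_of_lt ht1) x)
  exact ker_le_ker_nnrpow hA ht0 hker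

/-- If T² = 0 then every t-Aluthge transform vanishes. -/
theorem aluthge_eq_zero_of_sq_eq_zero (T U : H →L[ℂ] H)
    (hU : T = U * opAbs T) (hker : LinearMap.ker (U : H →ₗ[ℂ] H) = LinearMap.ker (T : H →ₗ[ℂ] H))
    (h : T ^ 2 = 0) :
    ∀ t : ℝ≥0, t ≤ 1 → aluthge T U t = 0 :=
  aluthge_eq_zero_of_sq_eq_zero_general T U hU h
end

section
/- For a bounded linear operator T on a complex Hilbert space, w(T)² ≤ (1/2)·‖T‖·‖T̃‖ + (1/4)·‖T*T + TT*‖, where T̃ is the Aluthge transform of T. -/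
open scoped NNReal ENNReal
open ContinuousLinearMap

set_option synthInstance.maxHeartbeats 1000000
set_option maxHeartbeats 1000000


variable {H : Type*} [NormedAddCommGroup H] [InnerProductSpace ℂ H] [CompleteSpace H]

/-!
For a unit vector `x`, Buzano's inequality applied to `Tx`, `T*x` and `x` gives
`|⟪Tx, x⟫|² = |⟪Tx, x⟫⟪x, T*x⟫| ≤ (‖Tx‖‖T*x‖ + |⟪T²x, x⟫|) / 2`, and by AM-GM
`‖Tx‖‖T*x‖ ≤ ⟪(T*T + TT*)x, x⟫ / 2`. It remains to show `‖T²‖ ≤ ‖T‖‖T̃‖`. With `B = |T|^{1/2}`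
we have `T² = U B T̃ B`; since `U` is isometric on the range of `|T|`, hence on its closure, which
equals the closure of the range of `B`, we get `‖T²x‖ = ‖B T̃ B x‖ ≤ ‖B‖² ‖T̃‖ ‖x‖ = ‖T‖‖T̃‖‖x‖`.
-/

open scoped InnerProductSpace

section Buzano

variable {𝕜 E : Type*} [RCLike 𝕜] [NormedAddCommGroup E] [InnerProductSpace 𝕜 E]

variable (𝕜) in
theorem norm_inner_mul_inner_le_of_norm_eq_one (a b : E) {e : E} (he : ‖e‖ = 1) :
    ‖⟪a, e⟫_𝕜 * ⟪e, b⟫_𝕜‖ ≤ (‖a‖ * ‖b‖ + ‖⟪a, b⟫_𝕜‖) / 2 := by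
  set r := (𝕜 ∙ e).reflection a
  have hr : ⟪r, b⟫_𝕜 = 2 * (⟪a, e⟫_𝕜 * ⟪e, b⟫_𝕜) - ⟪a, b⟫_𝕜 := by
    rw [show r = _ from Submodule.reflection_apply a, Submodule.starProjection_unit_singleton 𝕜 he,
      inner_sub_left, ← Nat.cast_smul_eq_nsmul 𝕜, inner_smul_left, inner_smul_left, inner_conj_symm,
      map_natCast, Nat.cast_ofNat]
  have htwice : ‖(2 : 𝕜) * (⟪a, e⟫_𝕜 * ⟪e, b⟫_𝕜)‖ ≤ ‖⟪a, b⟫_𝕜‖ + ‖a‖ * ‖b‖ :=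
    calc _ = ‖⟪a, b⟫_𝕜 + ⟪r, b⟫_𝕜‖ := by rw [hr, add_sub_cancel]
      _ ≤ ‖⟪a, b⟫_𝕜‖ + ‖r‖ * ‖b‖ := (norm_add_le _ _).trans (by gcongr; exact norm_inner_le_norm _ _)
      _ = _ := by rw [LinearIsometryEquiv.norm_map]
  rw [norm_mul, RCLike.norm_two] at htwice
  linarith

end Buzano

section Adjoint

variable {𝕜 E : Type*} [RCLike 𝕜] [NormedAddCommGroup E] [InnerProductSpace 𝕜 E] [CompleteSpace E]

theorem norm_apply_sq_add_norm_adjoint_apply_sq_le (T : E →L[𝕜] E) (x : E) :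
    ‖T x‖ ^ 2 + ‖adjoint T x‖ ^ 2 ≤ ‖adjoint T * T + T * adjoint T‖ * ‖x‖ ^ 2 := by
  have hsum :
      ‖T x‖ ^ 2 + ‖adjoint T x‖ ^ 2 = RCLike.re ⟪(adjoint T * T + T * adjoint T) x, x⟫_𝕜 := by
    rw [apply_norm_sq_eq_inner_adjoint_left, apply_norm_sq_eq_inner_adjoint_left, adjoint_adjoint,
      add_apply, inner_add_left, map_add]
    rfl
  calc _ = RCLike.re ⟪(adjoint T * T + T * adjoint T) x, x⟫_𝕜 := hsum
    _ ≤ ‖(adjoint T * T + T * adjoint T) x‖ * ‖x‖ := re_inner_le_norm _ _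
    _ ≤ ‖adjoint T * T + T * adjoint T‖ * ‖x‖ * ‖x‖ := by gcongr; exact le_opNorm _ _
    _ = _ := by ring

theorem norm_inner_apply_self_sq_le {T : E →L[𝕜] E} {x : E} (hx : ‖x‖ = 1) :
    ‖⟪T x, x⟫_𝕜‖ ^ 2 ≤ ‖adjoint T * T + T * adjoint T‖ / 4 + ‖T * T‖ / 2 := by
  have hbuzano := norm_inner_mul_inner_le_of_norm_eq_one 𝕜 (T x) (adjoint T x) hx
  rw [adjoint_inner_right, ← sq, norm_pow] at hbuzano
  have hsquare : ‖⟪T x, adjoint T x⟫_𝕜‖ ≤ ‖T * T‖ := by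
    rw [adjoint_inner_right]
    calc _ ≤ ‖(T * T) x‖ * ‖x‖ := norm_inner_le_norm _ _
      _ ≤ ‖T * T‖ * ‖x‖ * ‖x‖ := by gcongr; exact le_opNorm _ _
      _ = ‖T * T‖ := by rw [hx, mul_one, mul_one]
  have hsum := norm_apply_sq_add_norm_adjoint_apply_sq_le T x
  rw [hx, one_pow, mul_one] at hsum
  nlinarith [sq_nonneg (‖T x‖ - ‖adjoint T x‖)]

theorem closure_range_self_comp_adjoint {F : Type*} [NormedAddCommGroup F] [InnerProductSpace 𝕜 F]
    [CompleteSpace F] (T : E →L[𝕜] F) :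
    (T ∘L adjoint T).range.topologicalClosure = T.range.topologicalClosure :=
  calc (T ∘L adjoint T).range.topologicalClosure
      = (adjoint (T ∘L adjoint T)).range.topologicalClosure := by rw [adjoint_comp, adjoint_adjoint]
    _ = (T ∘L adjoint T).kerᗮ := (orthogonal_ker _).symm
    _ = (adjoint T).kerᗮ := by rw [ker_self_comp_adjoint]
    _ = T.range.topologicalClosure := by rw [orthogonal_ker, adjoint_adjoint]

end Adjoint

theorem Continuous.norm_apply_eq_of_mem_closure_range {X F G : Type*} [SeminormedAddCommGroup F]
    [SeminormedAddCommGroup G] {U : F → G} (hU : Continuous U) {A : X → F}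
    (h : ∀ z, ‖U (A z)‖ = ‖A z‖) {v : F} (hv : v ∈ closure (Set.range A)) : ‖U v‖ = ‖v‖ :=
  closure_minimal (Set.range_subset_iff.2 h) (isClosed_eq hU.norm continuous_norm) hv

theorem norm_opAbs_apply (T : H →L[ℂ] H) (x : H) : ‖opAbs T x‖ = ‖T x‖ := by
  have hsa : adjoint (opAbs T) = opAbs T := (CFC.abs_nonneg T).isSelfAdjoint.adjoint_eq
  rw [← sq_eq_sq₀ (norm_nonneg _) (norm_nonneg _), apply_norm_sq_eq_inner_adjoint_left,
    apply_norm_sq_eq_inner_adjoint_left, hsa]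
  exact congrArg (fun S : H →L[ℂ] H => RCLike.re ⟪S x, x⟫_ℂ) (CFC.abs_mul_abs T)

theorem aluthge_half_eq (T U : H →L[ℂ] H) :
    aluthge T U (1 / 2) = CFC.sqrt (opAbs T) * U * CFC.sqrt (opAbs T) := by
  have hhalf : (1 : ℝ≥0) - 1 / 2 = 1 / 2 := by
    rw [← NNReal.coe_inj, NNReal.coe_sub (by norm_num)]; norm_num
  rw [aluthge, hhalf, CFC.sqrt_eq_nnrpow, CFC.nnrpow_eq_pow]

theorem norm_mul_self_le_norm_mul_norm_aluthge_half {T U : H →L[ℂ] H} (hU : T = U * opAbs T) :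
    ‖T * T‖ ≤ ‖T‖ * ‖aluthge T U (1 / 2)‖ := by
  set B := CFC.sqrt (opAbs T)
  have hB : IsSelfAdjoint B := (CFC.sqrt_nonneg _).isSelfAdjoint
  have hBB : B * B = opAbs T := CFC.sqrt_mul_sqrt_self _ (CFC.abs_nonneg T)
  have hnormB : ‖B‖ * ‖B‖ = ‖T‖ := by
    rw [← CStarRing.norm_star_mul_self, hB.star_eq, hBB]
    exact CFC.norm_abs
  have hfactor : T * T = U * (B * (aluthge T U (1 / 2) * B)) := by
    rw [aluthge_half_eq]
    conv_lhs => rw [hU, ← hBB]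
    noncomm_ring
  have hiso : ∀ v ∈ closure (Set.range B), ‖U v‖ = ‖v‖ := by
    have hclosure : closure (Set.range B) = closure (Set.range (opAbs T)) := by
      have h := congrArg SetLike.coe (closure_range_self_comp_adjoint B)
      rw [hB.adjoint_eq, ← mul_def, hBB] at h
      simpa only [Submodule.topologicalClosure_coe, LinearMap.coe_range, coe_coe] using h.symm
    rw [hclosure]
    refine fun v => U.continuous.norm_apply_eq_of_mem_closure_range fun z => ?_
    rw [norm_opAbs_apply]
    exact congrArg (fun S : H →L[ℂ] H => ‖S z‖) hU.symm
  refine opNorm_le_bound _ (by positivity) fun x => ?_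
  calc ‖(T * T) x‖ = ‖B (aluthge T U (1 / 2) (B x))‖ := by
        rw [hfactor]; exact hiso _ (subset_closure (Set.mem_range_self _))
    _ ≤ ‖B‖ * (‖aluthge T U (1 / 2)‖ * (‖B‖ * ‖x‖)) := by
        exact le_opNorm_of_le _ (le_opNorm_of_le _ (le_opNorm _ _))
    _ = ‖T‖ * ‖aluthge T U (1 / 2)‖ * ‖x‖ := by rw [← hnormB]; ring

theorem numRadius_sq_le_of_forall {E : Type*} [NormedAddCommGroup E] [InnerProductSpace ℂ E]
    {T : E →L[ℂ] E} {c : ℝ} (hc : 0 ≤ c)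
    (h : ∀ x : E, ‖x‖ = 1 → ‖⟪T x, x⟫_ℂ‖ ^ 2 ≤ c) : numRadius T ^ 2 ≤ c := by
  have hle : numRadius T ≤ √c :=
    Real.iSup_le (fun x => Real.le_sqrt_of_sq_le (h x x.2)) (Real.sqrt_nonneg c)
  calc numRadius T ^ 2 ≤ √c ^ 2 :=
        pow_le_pow_left₀ (Real.iSup_nonneg fun _ => norm_nonneg _) hle 2
    _ = c := Real.sq_sqrt hc

theorem numRadius_sq_le_aluthge_half_bound_general (T U : H →L[ℂ] H)
    (hU : T = U * opAbs T) :
    numRadius T ^ 2 ≤ (1 / 2) * ‖T‖ * ‖aluthge T U (1 / 2)‖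
      + (1 / 4) * ‖adjoint T * T + T * adjoint T‖ := by
  refine numRadius_sq_le_of_forall (by positivity) fun x hx => ?_
  have hpoint := norm_inner_apply_self_sq_le (T := T) hx
  have hsquare := norm_mul_self_le_norm_mul_norm_aluthge_half hU
  linarith

/-- w(T)² ≤ (1/2)‖T‖‖T̃‖ + (1/4)‖T*T + TT*‖. -/
theorem numRadius_sq_le_aluthge_half_bound (T U : H →L[ℂ] H)
    (hU : T = U * opAbs T) (hker : LinearMap.ker (U : H →ₗ[ℂ] H) = LinearMap.ker (T : H →ₗ[ℂ] H)) :
    numRadius T ^ 2 ≤ (1 / 2) * ‖T‖ * ‖aluthge T U (1 / 2)‖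
      + (1 / 4) * ‖adjoint T * T + T * adjoint T‖ :=
  numRadius_sq_le_aluthge_half_bound_general T U hU
end

section
/- For a bounded linear operator T on a complex Hilbert space, (1/4)·m((Re(T²))²) + (1/16)·‖T*T + TT*‖² ≤ w(T)⁴, where m(S) = inf{⟨Sx,x⟩ : ‖x‖=1} is the Crawford number of the positive operator (Re(T²))². -/
open scoped NNReal ENNReal
open ContinuousLinearMap

set_option synthInstance.maxHeartbeats 1000000
set_option maxHeartbeats 1000000


variable {H : Type*} [NormedAddCommGroup H] [InnerProductSpace ℂ H] [CompleteSpace H]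

/-- The Crawford number of a (self-adjoint) operator:
inf of ⟨Sx, x⟩ over unit vectors. -/
noncomputable def crawford (S : H →L[ℂ] H) : ℝ :=
  ⨅ x : {x : H // ‖x‖ = 1}, (inner ℂ (S x) x : ℂ).re

/-! Write `T = a + i b` with `a = Re T` and `b = Im T` self-adjoint, so that `‖a‖, ‖b‖ ≤ w(T)`,
`Re(T²) = a² - b²` and `T*T + TT* = 2 (a² + b²)`. For a unit vector `x` the parallelogram law gives
`‖(a² - b²) x‖² + ‖(a² + b²) x‖² = 2 (‖a² x‖² + ‖b² x‖²) ≤ 4 w(T)⁴`, while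
`⟨Re(T²)² x, x⟩ = ‖Re(T²) x‖² ≥ m(Re(T²)²)` and `⟨(a² + b²) x, x⟩² ≤ ‖(a² + b²) x‖²`.
Since the norm of the self-adjoint operator `a² + b²` is the supremum of `|⟨(a² + b²) x, x⟩|`,
this yields `m(Re(T²)²) + ‖a² + b²‖² ≤ 4 w(T)⁴`. -/

open scoped InnerProductSpace ComplexStarModule
open Complex (I)

section StarModule

variable {A : Type*} [NonUnitalNonAssocRing A] [StarRing A] [Module ℂ A] [IsScalarTower ℂ A A]
  [SMulCommClass ℂ A A] [StarModule ℂ A]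

theorem realPart_mul_self (a : A) : (ℜ (a * a) : A) = ℜ a * ℜ a - ℑ a * ℑ a := by
  have a_eq := (realPart_add_I_smul_imaginaryPart a).symm
  rw [realPart_apply_coe, star_mul]
  conv_lhs => rw [a_eq]
  simp only [star_add, star_smul, selfAdjoint.star_val_eq, Complex.star_def, Complex.conj_I,
    mul_add, add_mul, smul_mul_assoc, mul_smul_comm]
  match_scalars <;> norm_num [← sq]

end StarModule

section InnerProductSpace

variable {𝕜 E : Type*} [RCLike 𝕜] [NormedAddCommGroup E] [InnerProductSpace 𝕜 E]

namespace ContinuousLinearMap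

theorem norm_le_of_forall_abs_re_inner_le {S : E →L[𝕜] E} (hS : (S : E →ₗ[𝕜] E).IsSymmetric)
    {M : ℝ} (hM : 0 ≤ M) (h : ∀ x, ‖x‖ = 1 → |RCLike.re ⟪S x, x⟫_𝕜| ≤ M) : ‖S‖ ≤ M := by
  rw [S.norm_eq_iSup_rayleighQuotient hS]
  refine ciSup_le fun x => ?_
  rcases eq_or_ne x 0 with rfl | hx
  · simpa using hM
  · have hc : ((‖x‖⁻¹ : ℝ) : 𝕜) ≠ 0 := by simpa using hx
    have hu : ‖((‖x‖⁻¹ : ℝ) : 𝕜) • x‖ = 1 := by simp [norm_smul, hx]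
    rw [← S.rayleigh_smul x hc, rayleighQuotient, hu, one_pow, div_one, reApplyInnerSelf_apply]
    exact h _ hu

theorem norm_inner_apply_le (T : E →L[𝕜] E) {x : E} (hx : ‖x‖ = 1) : ‖⟪T x, x⟫_𝕜‖ ≤ ‖T‖ :=
  calc ‖⟪T x, x⟫_𝕜‖ ≤ ‖T x‖ * ‖x‖ := norm_inner_le_norm _ _
    _ ≤ ‖T‖ * ‖x‖ * ‖x‖ := by gcongr; exact T.le_opNorm x
    _ = ‖T‖ := by simp [hx]

theorem norm_sub_apply_sq_add_norm_add_apply_sq_le (P Q : E →L[𝕜] E) (x : E) :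
    ‖(P - Q) x‖ ^ 2 + ‖(P + Q) x‖ ^ 2 ≤ 2 * (‖P‖ ^ 2 + ‖Q‖ ^ 2) * ‖x‖ ^ 2 := by
  have hpar := parallelogram_law_with_norm 𝕜 (P x) (Q x)
  have hP : ‖P x‖ ≤ ‖P‖ * ‖x‖ := P.le_opNorm x
  have hQ : ‖Q x‖ ≤ ‖Q‖ * ‖x‖ := Q.le_opNorm x
  simp only [sub_apply, add_apply]
  nlinarith [norm_nonneg (P x), norm_nonneg (Q x)]

end ContinuousLinearMap

end InnerProductSpace

section NumericalRadius

variable {E : Type*} [NormedAddCommGroup E] [InnerProductSpace ℂ E]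

theorem norm_inner_le_numRadius (T : E →L[ℂ] E) {x : E} (hx : ‖x‖ = 1) :
    ‖⟪T x, x⟫_ℂ‖ ≤ numRadius T :=
  le_ciSup (f := fun x : {x : E // ‖x‖ = 1} => ‖⟪T x, x⟫_ℂ‖)
    ⟨‖T‖, by rintro - ⟨y, rfl⟩; exact T.norm_inner_apply_le y.2⟩ ⟨x, hx⟩

theorem numRadius_nonneg (T : E →L[ℂ] E) : 0 ≤ numRadius T :=
  Real.iSup_nonneg fun _ => norm_nonneg _

theorem numRadius_I_smul (T : E →L[ℂ] E) : numRadius (I • T) = numRadius T := by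
  simp [numRadius]

theorem crawford_le_re_inner (S : E →L[ℂ] E) {x : E} (hx : ‖x‖ = 1) :
    crawford S ≤ (⟪S x, x⟫_ℂ).re :=
  ciInf_le (f := fun x : {x : E // ‖x‖ = 1} => (⟪S x, x⟫_ℂ).re)
    ⟨-‖S‖, by
      rintro - ⟨y, rfl⟩
      exact neg_le_of_abs_le ((Complex.abs_re_le_norm _).trans (S.norm_inner_apply_le y.2))⟩
    ⟨x, hx⟩

variable [CompleteSpace E]

theorem re_inner_realPart_apply (T : E →L[ℂ] E) (x : E) :
    (⟪(ℜ T : E →L[ℂ] E) x, x⟫_ℂ).re = (⟪T x, x⟫_ℂ).re :=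
  calc (⟪(ℜ T : E →L[ℂ] E) x, x⟫_ℂ).re = 2⁻¹ * ((⟪T x, x⟫_ℂ).re + (⟪x, T x⟫_ℂ).re) := by
        simp [realPart_apply_coe, star_eq_adjoint, adjoint_inner_left, mul_add]
    _ = (⟪T x, x⟫_ℂ).re := by rw [← inner_conj_symm x, Complex.conj_re]; ring

theorem norm_realPart_le_numRadius (T : E →L[ℂ] E) : ‖(ℜ T : E →L[ℂ] E)‖ ≤ numRadius T := by
  refine norm_le_of_forall_abs_re_inner_le (ℜ T).2.isSymmetric (numRadius_nonneg T) fun x hx => ?_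
  rw [RCLike.re_eq_complex_re, re_inner_realPart_apply]
  exact (Complex.abs_re_le_norm _).trans (norm_inner_le_numRadius T hx)

theorem norm_imaginaryPart_le_numRadius (T : E →L[ℂ] E) :
    ‖(ℑ T : E →L[ℂ] E)‖ ≤ numRadius T :=
  calc ‖(ℑ T : E →L[ℂ] E)‖ = ‖(ℜ (I • T) : E →L[ℂ] E)‖ := by simp
    _ ≤ numRadius (I • T) := norm_realPart_le_numRadius _
    _ = numRadius T := numRadius_I_smul T

theorem crawford_sq_add_sq_norm_le {A S : E →L[ℂ] E} (hA : IsSelfAdjoint A)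
    (hS : IsSelfAdjoint S) {c : ℝ} (hc : 0 ≤ c) (h : ∀ x : E, ‖x‖ = 1 → ‖A x‖ ^ 2 + ‖S x‖ ^ 2 ≤ c) :
    crawford (A ^ 2) + ‖S‖ ^ 2 ≤ c := by
  have hquad : ∀ x : E, ‖x‖ = 1 → crawford (A ^ 2) + (⟪S x, x⟫_ℂ).re ^ 2 ≤ c := by
    intro x hx
    have hcraw : crawford (A ^ 2) ≤ ‖A x‖ ^ 2 := by
      have hsq : (⟪(A ^ 2) x, x⟫_ℂ).re = ‖A x‖ ^ 2 := by
        rw [apply_norm_sq_eq_inner_adjoint_left, hA.adjoint_eq, sq, mul_def]; rfl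
      exact hsq ▸ crawford_le_re_inner (A ^ 2) hx
    have hre : |(⟪S x, x⟫_ℂ).re| ≤ ‖S x‖ :=
      (Complex.abs_re_le_norm _).trans (by simpa [hx] using norm_inner_le_norm (S x) x)
    nlinarith [sq_le_sq' (abs_le.1 hre).1 (abs_le.1 hre).2, h x hx]
  have hgap : 0 ≤ c - crawford (A ^ 2) := by
    rcases isEmpty_or_nonempty {x : E // ‖x‖ = 1} with hE | ⟨x, hx⟩
    · -- on the zero space `crawford` is the junk infimum `0`
      simp [crawford, hc]
    · nlinarith [hquad x hx]
  have hS' : ‖S‖ ≤ √(c - crawford (A ^ 2)) :=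
    norm_le_of_forall_abs_re_inner_le hS.isSymmetric (Real.sqrt_nonneg _)
      fun x hx => by
        rw [RCLike.re_eq_complex_re]
        exact Real.abs_le_sqrt (by linarith [hquad x hx])
  linarith [(Real.le_sqrt (norm_nonneg _) hgap).1 hS']

end NumericalRadius

/-- (1/4)m((Re(T²))²) + (1/16)‖T*T+TT*‖² ≤ w(T)⁴. -/
theorem crawford_lower_bound_numRadius_pow_four (T : H →L[ℂ] H) :
    (1 / 4) * crawford (((2⁻¹ : ℂ) • (T ^ 2 + adjoint (T ^ 2))) ^ 2)
      + (1 / 16) * ‖adjoint T * T + T * adjoint T‖ ^ 2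
      ≤ numRadius T ^ 4 := by
  set a : H →L[ℂ] H := (ℜ T : H →L[ℂ] H)
  set b : H →L[ℂ] H := (ℑ T : H →L[ℂ] H)
  have hRe : (2⁻¹ : ℂ) • (T ^ 2 + adjoint (T ^ 2)) = a * a - b * b := by
    rw [← realPart_mul_self, ← sq, realPart_apply_coe, star_eq_adjoint, ← Complex.coe_smul]
    norm_num
  have hsum : adjoint T * T + T * adjoint T = 2 • (a * a + b * b) := by
    simpa only [star_eq_adjoint] using star_mul_self_add_self_mul_star T
  have ha : ‖a * a‖ ≤ numRadius T ^ 2 :=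
    (norm_mul_le a a).trans (by nlinarith [norm_realPart_le_numRadius T, norm_nonneg a])
  have hb : ‖b * b‖ ≤ numRadius T ^ 2 :=
    (norm_mul_le b b).trans (by nlinarith [norm_imaginaryPart_le_numRadius T, norm_nonneg b])
  have hpoint : ∀ x : H, ‖x‖ = 1 →
      ‖(a * a - b * b) x‖ ^ 2 + ‖(a * a + b * b) x‖ ^ 2 ≤ 4 * numRadius T ^ 4 := fun x hx => by
    have := norm_sub_apply_sq_add_norm_add_apply_sq_le (a * a) (b * b) x
    rw [hx] at this
    nlinarith [norm_nonneg (a * a), norm_nonneg (b * b)]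
  have ha2 : IsSelfAdjoint (a * a) := by simpa only [sq] using (ℜ T).2.pow 2
  have hb2 : IsSelfAdjoint (b * b) := by simpa only [sq] using (ℑ T).2.pow 2
  have hbound := crawford_sq_add_sq_norm_le (ha2.sub hb2) (ha2.add hb2) (by positivity) hpoint
  rw [hRe, hsum, RCLike.norm_nsmul ℝ, nsmul_eq_mul]
  push_cast
  linarith
end
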